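/- Let A, B be accretive n×n complex matrices and t ∈ [0,1], with R = max{t, 1−t}. Then, in the Loewner order, ℜ((1−t)A + tB) ≤ ℜ(A !_t B) + 2R·( ℜ((A+B)/2) − (ℜA) ! (ℜB) ), where A !_t B = ((1−t)A^{-1} + tB^{-1})^{-1} and X ! Y = ((X^{-1}+Y^{-1})/2)^{-1}. -/

import Mathlib

open Matrix ComplexOrder

/-- The real part `ℜA = (A + A^*)/2` of a square complex matrix. -/
noncomputable def reMat {n : ℕ} (A : Matrix (Fin n) (Fin n) ℂ) : Matrix (Fin n) (Fin n) ℂ :=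
  (1 / 2 : ℝ) • (A + Aᴴ)

/-- The weighted harmonic mean `A !_t B = ((1-t)A⁻¹ + tB⁻¹)⁻¹`. -/
noncomputable def harmMean {n : ℕ} (A B : Matrix (Fin n) (Fin n) ℂ) (t : ℝ) :
    Matrix (Fin n) (Fin n) ℂ :=
  ((1 - t) • A⁻¹ + t • B⁻¹)⁻¹

/-!
Write `H = ℜA`, `K = ℜB`; the inequality is the sum of two Loewner inequalities.

First, `H !_t K ≤ ℜ(A !_t B)`. Put `C = (1-t)A⁻¹ + tB⁻¹`, `y = C⁻¹x`, `u = A⁻¹y`, `v = B⁻¹y`.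
Then `x = (1-t)u + tv` and `Re⟨x, C⁻¹x⟩ = Re⟨y, Cy⟩ = (1-t)⟨u, Hu⟩ + t⟨v, Kv⟩` (as
`Re⟨u, Au⟩ = ⟨u, Hu⟩`), whereas by completing the square
`⟨x, (H !_t K)x⟩ ≤ (1-t)⟨u, Hu⟩ + t⟨v, Kv⟩` for every such splitting of `x`.

Second, for positive definite `H, K` the gap between the weighted arithmetic and harmonic means is
`(1-t)H + tK - H !_t K = t(1-t) D S_t⁻¹ D` with `D = H - K` and `S_t = (1-t)K + tH`.
As `t(1-t) S_{1/2} ≤ (R/2) S_t`, inverting and conjugating by `D` bounds the gap at `t` by `2R`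
times the gap at `1/2`.
-/

open scoped MatrixOrder

namespace Matrix

variable {m : Type*}

theorem PosDef.convexComb {P Q : Matrix m m ℂ} (hP : P.PosDef) (hQ : Q.PosDef) {t : ℝ}
    (ht : t ∈ Set.Icc (0 : ℝ) 1) : ((1 - t) • P + t • Q).PosDef := by
  rcases ht.2.eq_or_lt with rfl | ht1
  · simpa using hQ
  · exact (hP.smul (sub_pos.mpr ht1)).add_posSemidef (hQ.posSemidef.smul ht.1)

variable [Fintype m]

theorem mulVec_inv_mulVec [DecidableEq m] {α : Type*} [CommRing α] {M : Matrix m m α}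
    (hM : IsUnit M) (x : m → α) : M *ᵥ (M⁻¹ *ᵥ x) = x := by
  rw [mulVec_mulVec, mul_nonsing_inv _ ((isUnit_iff_isUnit_det M).mp hM), one_mulVec]

theorem star_star_dotProduct_mulVec (M : Matrix m m ℂ) (x y : m → ℂ) :
    star (star x ⬝ᵥ (M *ᵥ y)) = star y ⬝ᵥ (Mᴴ *ᵥ x) := by
  rw [← star_dotProduct, star_mulVec, dotProduct_mulVec]

theorem re_dotProduct_mulVec_comm (M : Matrix m m ℂ) (x y : m → ℂ) :
    (star x ⬝ᵥ (M *ᵥ y)).re = (star y ⬝ᵥ (Mᴴ *ᵥ x)).re := by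
  rw [← star_star_dotProduct_mulVec, Complex.star_def, Complex.conj_re]

theorem IsHermitian.posSemidef_of_re_dotProduct_nonneg {M : Matrix m m ℂ} (hM : M.IsHermitian)
    (h : ∀ x, 0 ≤ (star x ⬝ᵥ (M *ᵥ x)).re) : M.PosSemidef :=
  .of_dotProduct_mulVec_nonneg hM fun x =>
    RCLike.nonneg_iff.mpr ⟨h x, hM.im_star_dotProduct_mulVec_self x⟩

theorem PosSemidef.two_mul_re_dotProduct_sub_le {H : Matrix m m ℂ} (hH : H.PosSemidef)
    (u p : m → ℂ) :
    2 * (star u ⬝ᵥ (H *ᵥ p)).re - (star p ⬝ᵥ (H *ᵥ p)).re ≤ (star u ⬝ᵥ (H *ᵥ u)).re := by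
  have hsq := hH.re_dotProduct_nonneg (u - p)
  have hcomm := re_dotProduct_mulVec_comm H p u
  rw [hH.isHermitian.eq] at hcomm
  simp only [star_sub, mulVec_sub, dotProduct_sub, sub_dotProduct, RCLike.re_to_complex,
    Complex.sub_re] at hsq
  linarith

variable [DecidableEq m]

theorem PosDef.inv_le_inv {X Y : Matrix m m ℂ} (hX : X.PosDef) (hXY : X ≤ Y) : Y⁻¹ ≤ X⁻¹ := by
  have hY : Y.PosDef := by simpa using hX.add_posSemidef hXY
  have := hY.isUnit.invertible
  have := hX.isUnit.invertible
  have := hX.inv.isUnit.invertible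
  -- both sides are Schur complements in the block matrix `!![Y, 1; 1, X⁻¹]`
  have h₁ := PosDef.fromBlocks₁₁ (1 : Matrix m m ℂ) X⁻¹ hY
  have h₂ := PosDef.fromBlocks₂₂ Y (1 : Matrix m m ℂ) hX.inv
  simp only [conjTranspose_one, Matrix.mul_one, Matrix.one_mul, inv_inv_of_invertible] at h₁ h₂
  exact h₁.mp (h₂.mpr hXY)

theorem PosDef.smul_inv_le_smul_inv {X Y : Matrix m m ℂ} (hX : X.PosDef) (hY : Y.PosDef)
    {c d : ℝ} (hc : 0 ≤ c) (hd : 0 < d) (h : c • X ≤ d • Y) : c • Y⁻¹ ≤ d • X⁻¹ := by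
  rcases hc.eq_or_lt with rfl | hc
  · simpa [Matrix.nonneg_iff_posSemidef] using hX.inv.posSemidef.smul hd.le
  have inv_smul : ∀ (r : ℝ) (M : Matrix m m ℂ), r ≠ 0 → IsUnit M → (r • M)⁻¹ = r⁻¹ • M⁻¹ :=
    fun r M hr hM => inv_eq_left_inv <| by
      rw [smul_mul_smul_comm, inv_mul_cancel₀ hr, one_smul,
        nonsing_inv_mul _ ((isUnit_iff_isUnit_det M).mp hM)]
  have hinv := (hX.smul hc).inv_le_inv h
  rw [inv_smul _ _ hd.ne' hY.isUnit, inv_smul _ _ hc.ne' hX.isUnit] at hinv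
  have hcd : d • X⁻¹ - c • Y⁻¹ = (c * d) • (c⁻¹ • X⁻¹ - d⁻¹ • Y⁻¹) := by
    rw [smul_sub, smul_smul, smul_smul, mul_inv_cancel_right₀ hd.ne', mul_comm c d,
      mul_inv_cancel_right₀ hc.ne']
  rw [Matrix.le_iff, hcd]
  exact hinv.smul (mul_pos hc hd).le

end Matrix

section Accretive

variable {n : ℕ}

theorem reMat_isHermitian (A : Matrix (Fin n) (Fin n) ℂ) : (reMat A).IsHermitian := by
  simp [reMat, IsHermitian, conjTranspose_smul, add_comm]

theorem reMat_add (A B : Matrix (Fin n) (Fin n) ℂ) : reMat (A + B) = reMat A + reMat B := by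
  simp only [reMat, conjTranspose_add, ← smul_add]
  abel_nf

theorem reMat_smul (r : ℝ) (A : Matrix (Fin n) (Fin n) ℂ) : reMat (r • A) = r • reMat A := by
  simp only [reMat, conjTranspose_smul, star_trivial, smul_add, smul_comm r]

theorem dotProduct_reMat_mulVec (A : Matrix (Fin n) (Fin n) ℂ) (x : Fin n → ℂ) :
    star x ⬝ᵥ (reMat A *ᵥ x) = (star x ⬝ᵥ (A *ᵥ x)).re := by
  rw [reMat, smul_mulVec, add_mulVec, dotProduct_smul, dotProduct_add,
    ← star_star_dotProduct_mulVec, Complex.star_def, Complex.add_conj]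
  simp

theorem isUnit_of_posDef_reMat {A : Matrix (Fin n) (Fin n) ℂ} (hA : (reMat A).PosDef) :
    IsUnit A := by
  rw [isUnit_iff_isUnit_det, isUnit_iff_ne_zero]
  intro hdet
  obtain ⟨v, hv, hAv⟩ := exists_mulVec_eq_zero_iff.mpr hdet
  simpa [dotProduct_reMat_mulVec, hAv] using hA.re_dotProduct_pos hv

theorem re_dotProduct_inv_mulVec {M : Matrix (Fin n) (Fin n) ℂ} (hM : IsUnit M)
    (x : Fin n → ℂ) :
    (star x ⬝ᵥ (M⁻¹ *ᵥ x)).re = (star (M⁻¹ *ᵥ x) ⬝ᵥ (M *ᵥ (M⁻¹ *ᵥ x))).re := by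
  rw [mulVec_inv_mulVec hM, star_dotProduct (M⁻¹ *ᵥ x), Complex.star_def, Complex.conj_re]

theorem posDef_reMat_inv {A : Matrix (Fin n) (Fin n) ℂ} (hA : (reMat A).PosDef) :
    (reMat A⁻¹).PosDef := by
  refine .of_dotProduct_mulVec_pos (reMat_isHermitian _) fun x hx => ?_
  have hy : A⁻¹ *ᵥ x ≠ 0 := fun h => hx <| by
    rw [← mulVec_inv_mulVec (isUnit_of_posDef_reMat hA) x, h, mulVec_zero]
  rw [dotProduct_reMat_mulVec, re_dotProduct_inv_mulVec (isUnit_of_posDef_reMat hA),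
    ← dotProduct_reMat_mulVec]
  exact hA.dotProduct_mulVec_pos hy

theorem re_dotProduct_harmMean_mulVec_le {H K : Matrix (Fin n) (Fin n) ℂ} (hH : H.PosDef)
    (hK : K.PosDef) {t : ℝ} (ht : t ∈ Set.Icc (0 : ℝ) 1) (u v : Fin n → ℂ) :
    (star ((1 - t) • u + t • v) ⬝ᵥ (harmMean H K t *ᵥ ((1 - t) • u + t • v))).re ≤
      (1 - t) * (star u ⬝ᵥ (H *ᵥ u)).re + t * (star v ⬝ᵥ (K *ᵥ v)).re := by
  have hM : IsUnit ((1 - t) • H⁻¹ + t • K⁻¹) := (hH.inv.convexComb hK.inv ht).isUnit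
  set z := harmMean H K t *ᵥ ((1 - t) • u + t • v)
  have re_comb : ∀ w w' : Fin n → ℂ, (star ((1 - t) • w + t • w') ⬝ᵥ z).re =
      (1 - t) * (star w ⬝ᵥ z).re + t * (star w' ⬝ᵥ z).re := fun w w' => by
    simp [star_add, star_smul, add_dotProduct, smul_dotProduct]
  have hz : (1 - t) • u + t • v = (1 - t) • (H⁻¹ *ᵥ z) + t • (K⁻¹ *ᵥ z) := by
    rw [← smul_mulVec, ← smul_mulVec, ← add_mulVec]
    exact (mulVec_inv_mulVec hM _).symm
  have hu := hH.posSemidef.two_mul_re_dotProduct_sub_le u (H⁻¹ *ᵥ z)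
  have hv := hK.posSemidef.two_mul_re_dotProduct_sub_le v (K⁻¹ *ᵥ z)
  rw [mulVec_inv_mulVec hH.isUnit] at hu
  rw [mulVec_inv_mulVec hK.isUnit] at hv
  have hre_uv := re_comb u v
  have hre_pq : (star ((1 - t) • u + t • v) ⬝ᵥ z).re =
      (1 - t) * (star (H⁻¹ *ᵥ z) ⬝ᵥ z).re + t * (star (K⁻¹ *ᵥ z) ⬝ᵥ z).re := by
    rw [hz, re_comb]
  linarith [mul_le_mul_of_nonneg_left hu (sub_nonneg.mpr ht.2),
    mul_le_mul_of_nonneg_left hv ht.1]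

theorem harmMean_reMat_le_reMat_harmMean {A B : Matrix (Fin n) (Fin n) ℂ}
    (hA : (reMat A).PosDef) (hB : (reMat B).PosDef) {t : ℝ} (ht : t ∈ Set.Icc (0 : ℝ) 1) :
    harmMean (reMat A) (reMat B) t ≤ reMat (harmMean A B t) := by
  set C := (1 - t) • A⁻¹ + t • B⁻¹
  have hC : IsUnit C := isUnit_of_posDef_reMat <| by
    simpa only [C, reMat_add, reMat_smul] using
      (posDef_reMat_inv hA).convexComb (posDef_reMat_inv hB) ht
  have hmean : (harmMean (reMat A) (reMat B) t).PosDef := (hA.inv.convexComb hB.inv ht).inv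
  refine ((reMat_isHermitian _).sub hmean.isHermitian).posSemidef_of_re_dotProduct_nonneg
    fun x => ?_
  set y := C⁻¹ *ᵥ x
  have hx : x = (1 - t) • (A⁻¹ *ᵥ y) + t • (B⁻¹ *ᵥ y) := by
    rw [← smul_mulVec, ← smul_mulVec, ← add_mulVec, mulVec_inv_mulVec hC]
  have hre : (star x ⬝ᵥ (reMat (harmMean A B t) *ᵥ x)).re =
      (1 - t) * (star (A⁻¹ *ᵥ y) ⬝ᵥ (reMat A *ᵥ (A⁻¹ *ᵥ y))).re +
        t * (star (B⁻¹ *ᵥ y) ⬝ᵥ (reMat B *ᵥ (B⁻¹ *ᵥ y))).re := by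
    simp only [dotProduct_reMat_mulVec, Complex.ofReal_re]
    rw [harmMean, re_dotProduct_inv_mulVec hC,
      ← re_dotProduct_inv_mulVec (isUnit_of_posDef_reMat hA),
      ← re_dotProduct_inv_mulVec (isUnit_of_posDef_reMat hB)]
    simp only [C, add_mulVec, smul_mulVec, dotProduct_add, dotProduct_smul, Complex.add_re,
      Complex.smul_re, smul_eq_mul]
    rfl
  have hle := re_dotProduct_harmMean_mulVec_le hA hB ht (A⁻¹ *ᵥ y) (B⁻¹ *ᵥ y)
  rw [← hx, ← hre] at hle
  simpa [sub_mulVec, dotProduct_sub] using hle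

end Accretive

section PositiveDefinite

variable {n : ℕ}

theorem smul_add_smul_sub_harmMean {H K : Matrix (Fin n) (Fin n) ℂ} (hH : IsUnit H)
    (hK : IsUnit K) {t : ℝ} (hS : IsUnit ((1 - t) • K + t • H)) :
    (1 - t) • H + t • K - harmMean H K t =
      (t * (1 - t)) • ((H - K) * ((1 - t) • K + t • H)⁻¹ * (H - K)) := by
  set S := (1 - t) • K + t • H
  have hSS : S * S⁻¹ = 1 := mul_nonsing_inv _ ((isUnit_iff_isUnit_det S).mp hS)
  have hSS' : S⁻¹ * S = 1 := nonsing_inv_mul _ ((isUnit_iff_isUnit_det S).mp hS)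
  have hmean : harmMean H K t = K * S⁻¹ * H := by
    have hfac : (1 - t) • H⁻¹ + t • K⁻¹ = H⁻¹ * S * K⁻¹ := by
      simp only [S, Matrix.mul_add, Matrix.add_mul, Matrix.mul_smul, Matrix.smul_mul,
        Matrix.mul_assoc, nonsing_inv_mul _ ((isUnit_iff_isUnit_det H).mp hH),
        mul_nonsing_inv _ ((isUnit_iff_isUnit_det K).mp hK), Matrix.one_mul, Matrix.mul_one,
        add_comm]
    rw [harmMean, hfac, Matrix.mul_inv_rev, Matrix.mul_inv_rev,
      nonsing_inv_nonsing_inv _ ((isUnit_iff_isUnit_det H).mp hH),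
      nonsing_inv_nonsing_inv _ ((isUnit_iff_isUnit_det K).mp hK), Matrix.mul_assoc]
  have hHS : H = S + (1 - t) • (H - K) := by simp only [S]; module
  have hKS : K = S - t • (H - K) := by simp only [S]; module
  rw [hmean]
  set D := H - K
  clear_value S D
  subst hHS hKS
  simp only [Matrix.sub_mul, Matrix.mul_add, Matrix.smul_mul, Matrix.mul_smul, Matrix.mul_assoc,
    hSS', Matrix.mul_one]
  rw [← Matrix.mul_assoc S, hSS, Matrix.one_mul]
  module

theorem smul_add_smul_sub_harmMean_le {H K : Matrix (Fin n) (Fin n) ℂ} (hH : H.PosDef)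
    (hK : K.PosDef) {t R : ℝ} (ht : t ∈ Set.Icc (0 : ℝ) 1) (htR : t ≤ R) (htR' : 1 - t ≤ R) :
    (1 - t) • H + t • K - harmMean H K t ≤
      (2 * R) • ((1 / 2 : ℝ) • (H + K) - harmMean H K (1 / 2)) := by
  have hS : ((1 - t) • K + t • H).PosDef := hK.convexComb hH ht
  have hS₀ : ((1 - 1 / 2 : ℝ) • K + (1 / 2 : ℝ) • H).PosDef := hK.convexComb hH (by norm_num)
  have hmid : (1 / 2 : ℝ) • (H + K) = (1 - 1 / 2 : ℝ) • H + (1 / 2 : ℝ) • K := by module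
  rw [smul_add_smul_sub_harmMean hH.isUnit hK.isUnit hS.isUnit, hmid,
    smul_add_smul_sub_harmMean hH.isUnit hK.isUnit hS₀.isUnit]
  have hSS₀ : (t * (1 - t)) • ((1 - 1 / 2 : ℝ) • K + (1 / 2 : ℝ) • H) ≤
      (R / 2) • ((1 - t) • K + t • H) := by
    have hdiff : (R / 2) • ((1 - t) • K + t • H) -
        (t * (1 - t)) • ((1 - 1 / 2 : ℝ) • K + (1 / 2 : ℝ) • H) =
        ((1 - t) * (R - t) / 2) • K + (t * (R - (1 - t)) / 2) • H := by module
    rw [Matrix.le_iff, hdiff]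
    exact (hK.posSemidef.smul (by nlinarith [ht.2])).add
      (hH.posSemidef.smul (by nlinarith [ht.1]))
  have hinv := hS₀.smul_inv_le_smul_inv hS (mul_nonneg ht.1 (sub_nonneg.mpr ht.2))
    (by linarith) hSS₀
  have hconj := star_left_conjugate_le_conjugate hinv (H - K)
  rw [star_eq_conjTranspose, (hH.isHermitian.sub hK.isHermitian).eq] at hconj
  convert hconj using 1
  · simp only [Matrix.mul_smul, Matrix.smul_mul]
  · simp only [Matrix.mul_smul, Matrix.smul_mul, smul_smul]
    ring_nf

end PositiveDefinite

/-- For accretive `A, B`, `t ∈ [0,1]` and `R = max {t, 1-t}`, in the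
Loewner order:
`ℜ((1-t)A + tB) ≤ ℜ(A !_t B) + 2R(ℜ((A+B)/2) - (ℜA) ! (ℜB))`. -/
theorem stmt6 (n : ℕ) (A B : Matrix (Fin n) (Fin n) ℂ)
    (hA : (reMat A).PosDef) (hB : (reMat B).PosDef)
    (t : ℝ) (ht : t ∈ Set.Icc (0 : ℝ) 1) (R : ℝ) (hR : R = max t (1 - t)) :
    (reMat (harmMean A B t) +
        (2 * R) • (reMat ((1 / 2 : ℝ) • (A + B)) - harmMean (reMat A) (reMat B) (1 / 2)) -
      reMat ((1 - t) • A + t • B)).PosSemidef := by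
  have htR : t ≤ R := hR ▸ le_max_left _ _
  have htR' : 1 - t ≤ R := hR ▸ le_max_right _ _
  rw [← Matrix.le_iff]
  calc reMat ((1 - t) • A + t • B)
      = ((1 - t) • reMat A + t • reMat B - harmMean (reMat A) (reMat B) t) +
          harmMean (reMat A) (reMat B) t := by
        rw [reMat_add, reMat_smul, reMat_smul, sub_add_cancel]
    _ ≤ (2 * R) • ((1 / 2 : ℝ) • (reMat A + reMat B) - harmMean (reMat A) (reMat B) (1 / 2)) +
          reMat (harmMean A B t) :=
        add_le_add (smul_add_smul_sub_harmMean_le hA hB ht htR htR')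
          (harmMean_reMat_le_reMat_harmMean hA hB ht)
    _ = _ := by rw [reMat_smul, reMat_add, add_comm]
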